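/- Let D₊ be a diagonal n×n real matrix with positive diagonal entries and s, y ∈ ℝⁿ with sᵀ y > 0. Then the matrix P = D₊ + (y yᵀ)/(sᵀ y) − (D₊ s sᵀ D₊)/(sᵀ D₊ s) is invertible with explicit inverse P⁻¹ = D₊⁻¹ + ((s − D₊⁻¹ y) sᵀ + s (s − D₊⁻¹ y)ᵀ)/(sᵀ y) − ((s − D₊⁻¹ y)ᵀ y) s sᵀ/(sᵀ y)². -/

import Mathlib

open Matrix

variable {n : ℕ}

lemma mul_vecMulVec (A : Matrix (Fin n) (Fin n) ℝ) (a b : Fin n → ℝ) :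
    A * vecMulVec a b = vecMulVec (A *ᵥ a) b := by
  ext i j
  simp [mul_apply, vecMulVec_apply, mulVec, dotProduct, Finset.sum_mul, mul_assoc]

lemma vecMulVec_mul (A : Matrix (Fin n) (Fin n) ℝ) (a b : Fin n → ℝ) :
    vecMulVec a b * A = vecMulVec a (b ᵥ* A) := by
  ext i j
  simp [mul_apply, vecMulVec_apply, vecMul, dotProduct, Finset.mul_sum, mul_assoc]

lemma vecMulVec_mul_vecMulVec (a b c e : Fin n → ℝ) :
    vecMulVec a b * vecMulVec c e = (b ⬝ᵥ c) • vecMulVec a e := by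
  ext i j
  simp [mul_apply, vecMulVec_apply, dotProduct, Finset.sum_mul, Finset.mul_sum]
  exact Finset.sum_congr rfl fun k _ => by ring

lemma vecMulVec_sub_right (a b c : Fin n → ℝ) :
    vecMulVec a (b - c) = vecMulVec a b - vecMulVec a c := by
  ext i j; simp [vecMulVec_apply, mul_sub]

lemma vecMulVec_sub_left (a b c : Fin n → ℝ) :
    vecMulVec (a - b) c = vecMulVec a c - vecMulVec b c := by
  ext i j; simp [vecMulVec_apply, sub_mul]

lemma vecMul_diag_eq (d : Fin n → ℝ) (x : Fin n → ℝ) :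
    x ᵥ* Matrix.diagonal d = Matrix.diagonal d *ᵥ x := by
  funext i; simp [vecMul_diagonal, mulVec_diagonal, mul_comm]

lemma diag_mulVec_dot (d : Fin n → ℝ) (x z : Fin n → ℝ) :
    (Matrix.diagonal d *ᵥ x) ⬝ᵥ z = x ⬝ᵥ (Matrix.diagonal d *ᵥ z) := by
  simp only [dotProduct, mulVec_diagonal]
  exact Finset.sum_congr rfl fun k _ => by ring

lemma vecMulVec_mulVec' (a b c : Fin n → ℝ) :
    vecMulVec a b *ᵥ c = (b ⬝ᵥ c) • a := by
  funext i
  simp [mulVec, vecMulVec_apply, dotProduct, Finset.mul_sum, Finset.sum_mul, mul_assoc]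
  exact Finset.sum_congr rfl fun k _ => by ring

lemma smul_vecMulVec' (k : ℝ) (a b : Fin n → ℝ) :
    vecMulVec (k • a) b = k • vecMulVec a b := by
  ext i j; simp [vecMulVec_apply, mul_assoc]

theorem qncgna_inverse {n : ℕ} (d : Fin n → ℝ) (hd : ∀ i, 0 < d i)
    (s y : Fin n → ℝ) (hsy : 0 < s ⬝ᵥ y)
    (D : Matrix (Fin n) (Fin n) ℝ) (hD : D = Matrix.diagonal d)
    (P : Matrix (Fin n) (Fin n) ℝ)
    (hP : P = D + (s ⬝ᵥ y)⁻¹ • vecMulVec y y -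
      (s ⬝ᵥ D *ᵥ s)⁻¹ • (D * vecMulVec s s * D)) :
    IsUnit P.det ∧
    P⁻¹ = D⁻¹ + (s ⬝ᵥ y)⁻¹ • (vecMulVec (s - D⁻¹ *ᵥ y) s + vecMulVec s (s - D⁻¹ *ᵥ y))
      - (((s - D⁻¹ *ᵥ y) ⬝ᵥ y) / (s ⬝ᵥ y) ^ 2) • vecMulVec s s := by
  subst hD
  have ha : s ⬝ᵥ y ≠ 0 := ne_of_gt hsy
  have hs0 : s ≠ 0 := by
    rintro rfl; simp at hsy
  set D' : Matrix (Fin n) (Fin n) ℝ := Matrix.diagonal (fun i => (d i)⁻¹) with hD'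
  have hDD' : Matrix.diagonal d * D' = 1 := by
    rw [hD', diagonal_mul_diagonal]
    rw [show (fun i => d i * (d i)⁻¹) = fun _ => (1:ℝ) from funext fun i => mul_inv_cancel₀ (hd i).ne', diagonal_one]
  have hDinv : (Matrix.diagonal d)⁻¹ = D' := inv_eq_right_inv hDD'
  have hDv : Matrix.diagonal d *ᵥ (D' *ᵥ y) = y := by
    rw [mulVec_mulVec, hDD', one_mulVec]
  have hb : 0 < s ⬝ᵥ (Matrix.diagonal d *ᵥ s) := by
    have hex : ∃ i, s i ≠ 0 := by
      by_contra h; push_neg at h; exact hs0 (funext h)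
    obtain ⟨i, hi⟩ := hex
    have h2 : 0 < s i ^ 2 := by positivity
    simp only [dotProduct, mulVec_diagonal]
    apply Finset.sum_pos' (fun k _ => by nlinarith [hd k, sq_nonneg (s k)])
    exact ⟨i, Finset.mem_univ i, by nlinarith [hd i]⟩
  have hbne : s ⬝ᵥ (Matrix.diagonal d *ᵥ s) ≠ 0 := ne_of_gt hb
  rw [hDinv]
  set Q : Matrix (Fin n) (Fin n) ℝ :=
    D' + (s ⬝ᵥ y)⁻¹ • (vecMulVec (s - D' *ᵥ y) s + vecMulVec s (s - D' *ᵥ y))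
      - (((s - D' *ᵥ y) ⬝ᵥ y) / (s ⬝ᵥ y) ^ 2) • vecMulVec s s with hQ
  have hD'D : D' * Matrix.diagonal d = 1 := by
    rw [hD', diagonal_mul_diagonal]
    rw [show (fun i => (d i)⁻¹ * d i) = fun _ => (1:ℝ) from funext fun i => inv_mul_cancel₀ (hd i).ne', diagonal_one]
  have hv1 : y ᵥ* D' = D' *ᵥ y := by rw [hD', vecMul_diag_eq]
  have hv2 : (Matrix.diagonal d *ᵥ s) ᵥ* D' = s := by
    rw [hD', vecMul_diag_eq, ← hD', mulVec_mulVec, hD'D, one_mulVec]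
  have hc1 : y ⬝ᵥ s = s ⬝ᵥ y := dotProduct_comm _ _
  have hc2 : y ⬝ᵥ (D' *ᵥ y) = (D' *ᵥ y) ⬝ᵥ y := dotProduct_comm _ _
  have key : P * Q = 1 := by
    rw [hP, hQ]
    simp only [vecMulVec_sub_left, vecMulVec_sub_right, _root_.mul_vecMulVec, _root_.vecMulVec_mul,
      hv1, hv2, vecMul_diag_eq, Matrix.add_mul, Matrix.mul_add, Matrix.sub_mul, Matrix.mul_sub,
      Matrix.smul_mul, Matrix.mul_smul, _root_.vecMulVec_mul_vecMulVec, hDD', hDv,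
      mulVec_mulVec, vecMulVec_mulVec', smul_vecMulVec', diag_mulVec_dot,
      dotProduct_sub, sub_dotProduct, smul_sub, smul_add, hc1, hc2]
    match_scalars <;> field_simp <;> ring
  exact ⟨isUnit_det_of_right_inverse key, inv_eq_right_inv key⟩
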